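/- With B as above, for any σ ∈ S_{2n} the product Π_{i=1}^{2n} B(i,σ(i)) (taken in increasing order of i) equals (Π_{i=1}^n A(i,π(i))) · e if σ = ρ(π) for some π ∈ S_n, and equals 0 otherwise. -/

import Mathlib

/-!
Group the ordered product into the consecutive pairs `B(2i, σ(2i)) · B(2i+1, σ(2i+1))`.
Row `2i` vanishes off the first `n` columns and row `2i+1` off the last `n`, and
`h_j h'_k = 0` for `j ≠ k`, so a pair can only be nonzero when `σ(2i) = j` and
`σ(2i+1) = n + j` for some `j`; since `σ` is injective, `i ↦ j` is then a permutation `π`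
with `σ = ρ(π)`. If `σ = ρ(π)`, the `i`-th pair is `A(i, π i) h_{π i} h'_{π i} = A(i, π i) • e`,
and the product of these is `(∏ A(i, π i)) • e` because `e` is idempotent and `n ≠ 0`.
-/

theorem List.prod_ofFn_two_mul {M : Type*} [Monoid M] {n : ℕ} (f : Fin (2 * n) → M) :
    (List.ofFn f).prod =
      (List.ofFn fun i : Fin n => f ⟨2 * i, by omega⟩ * f ⟨2 * i + 1, by omega⟩).prod := by
  simp [List.ofFn_mul' f, List.prod_flatten, List.map_ofFn, Function.comp_def, List.ofFn_succ]

theorem List.prod_map_smul_of_isIdempotentElem {K R : Type*} [CommSemiring K] [Semiring R]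
    [Algebra K R] {e : R} (he : IsIdempotentElem e) :
    ∀ {l : List K}, l ≠ [] → (l.map (· • e)).prod = l.prod • e
  | [a], _ => by simp
  | a :: b :: l, _ => by
    rw [List.map_cons, List.prod_cons, prod_map_smul_of_isIdempotentElem he (cons_ne_nil b l),
      smul_mul_smul_comm, he.eq, List.prod_cons, List.prod_cons, List.prod_cons]

theorem Fin.exists_eq_or_exists_eq_add_of_two_mul {n : ℕ} (c : Fin (2 * n)) :
    (∃ j : Fin n, c = ⟨j, by omega⟩) ∨ ∃ j : Fin n, c = ⟨n + j, by omega⟩ := by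
  by_cases hc : c.val < n
  · exact Or.inl ⟨⟨c, hc⟩, rfl⟩
  · exact Or.inr ⟨⟨c - n, by omega⟩, Fin.ext (by simp; omega)⟩

/-- `σ ∈ S_{2n}` is the interleaving `ρ(π)` of `π ∈ S_n`. -/
def Interleaves (n : ℕ) (π : Equiv.Perm (Fin n)) (σ : Equiv.Perm (Fin (2 * n))) : Prop :=
  ∀ i : Fin n,
    σ ⟨2 * i.val, by have := i.isLt; omega⟩ =
      ⟨(π i).val, by have := (π i).isLt; omega⟩ ∧
    σ ⟨2 * i.val + 1, by have := i.isLt; omega⟩ =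
      ⟨n + (π i).val, by have := (π i).isLt; omega⟩

theorem exists_interleaves_of_forall {n : ℕ} {σ : Equiv.Perm (Fin (2 * n))}
    (hσ : ∀ i : Fin n, ∃ j : Fin n,
      σ ⟨2 * i, by omega⟩ = ⟨j, by omega⟩ ∧ σ ⟨2 * i + 1, by omega⟩ = ⟨n + j, by omega⟩) :
    ∃ π, Interleaves n π σ := by
  choose p hp using hσ
  have hp_inj : Function.Injective p := fun i i' hii' => by
    have h2 := congrArg Fin.val (σ.injective ((hp i).1.trans (hii' ▸ (hp i').1.symm)))
    exact Fin.ext (by simpa using h2)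
  exact ⟨Equiv.ofBijective p (Finite.injective_iff_bijective.mp hp_inj), hp⟩

theorem exists_column_pair_of_mul_ne_zero {K R : Type*} [CommSemiring K] [Semiring R] [Algebra K R]
    {n : ℕ} {h h' : Fin n → R} (hzero : ∀ j k, j ≠ k → h j * h' k = 0)
    {A : Matrix (Fin n) (Fin n) K} {B : Matrix (Fin (2 * n)) (Fin (2 * n)) R}
    (hB1 : ∀ i j : Fin n, B ⟨2 * i, by omega⟩ ⟨j, by omega⟩ = A i j • h j)
    (hB2 : ∀ i j : Fin n, B ⟨2 * i, by omega⟩ ⟨n + j, by omega⟩ = 0)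
    (hB3 : ∀ i j : Fin n, B ⟨2 * i + 1, by omega⟩ ⟨n + j, by omega⟩ = h' j)
    (hB4 : ∀ i j : Fin n, B ⟨2 * i + 1, by omega⟩ ⟨j, by omega⟩ = 0)
    {i : Fin n} {c d : Fin (2 * n)}
    (hne : B ⟨2 * i, by omega⟩ c * B ⟨2 * i + 1, by omega⟩ d ≠ 0) :
    ∃ j : Fin n, c = ⟨j, by omega⟩ ∧ d = ⟨n + j, by omega⟩ := by
  obtain ⟨j, rfl⟩ | ⟨j, rfl⟩ := c.exists_eq_or_exists_eq_add_of_two_mul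
  · obtain ⟨k, rfl⟩ | ⟨k, rfl⟩ := d.exists_eq_or_exists_eq_add_of_two_mul
    · rw [hB4, mul_zero] at hne
      exact absurd rfl hne
    · obtain rfl : j = k := by
        by_contra hjk
        rw [hB1, hB3, smul_mul_assoc, hzero j k hjk, smul_zero] at hne
        exact hne rfl
      exact ⟨j, rfl, rfl⟩
  · rw [hB2, zero_mul] at hne
    exact absurd rfl hne

/-- In a (possibly noncommutative) real algebra, with `h_j h'_j = e` (`e` idempotent,
commuting with the `h_j`) and `h_j h'_k = 0` for `j ≠ k`, and `B` the `2n × 2n` matrix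
with `B(2i-1,j) = A(i,j) h_j` (`j ≤ n`), `B(2i-1,j) = 0` (`j > n`), `B(2i,n+j) = h'_j`,
`B(2i,j) = 0` (`j ≤ n`): for any `σ ∈ S_{2n}`, the ordered product
`Π_{i=1}^{2n} B(i,σ(i))` equals `(Π_{i=1}^n A(i,π(i))) · e` if `σ = ρ(π)` for some
`π ∈ S_n`, and equals `0` otherwise. -/
theorem ordered_product_of_interleave {R : Type*} [Ring R] [Algebra ℝ R]
    (n : ℕ) (hn : 0 < n) (h h' : Fin n → R) (e : R)
    (hprod : ∀ j, h j * h' j = e)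
    (hzero : ∀ j k, j ≠ k → h j * h' k = 0)
    (hidem : e * e = e)
    (A : Matrix (Fin n) (Fin n) ℝ)
    (B : Matrix (Fin (2 * n)) (Fin (2 * n)) R)
    (hB1 : ∀ (i j : Fin n), B ⟨2 * i.val, by have := i.isLt; omega⟩
        ⟨j.val, by have := j.isLt; omega⟩ = A i j • h j)
    (hB2 : ∀ (i j : Fin n), B ⟨2 * i.val, by have := i.isLt; omega⟩
        ⟨n + j.val, by have := j.isLt; omega⟩ = 0)
    (hB3 : ∀ (i j : Fin n), B ⟨2 * i.val + 1, by have := i.isLt; omega⟩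
        ⟨n + j.val, by have := j.isLt; omega⟩ = h' j)
    (hB4 : ∀ (i j : Fin n), B ⟨2 * i.val + 1, by have := i.isLt; omega⟩
        ⟨j.val, by have := j.isLt; omega⟩ = 0)
    (σ : Equiv.Perm (Fin (2 * n))) :
    (∀ π : Equiv.Perm (Fin n), Interleaves n π σ →
      (List.ofFn fun i : Fin (2 * n) => B i (σ i)).prod = (∏ i : Fin n, A i (π i)) • e) ∧
    ((¬ ∃ π : Equiv.Perm (Fin n), Interleaves n π σ) →
      (List.ofFn fun i : Fin (2 * n) => B i (σ i)).prod = 0) := by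
  rw [List.prod_ofFn_two_mul]
  constructor
  · intro π hπ
    have hpair : ∀ i : Fin n, B ⟨2 * i, by omega⟩ (σ ⟨2 * i, by omega⟩) *
        B ⟨2 * i + 1, by omega⟩ (σ ⟨2 * i + 1, by omega⟩) = A i (π i) • e := fun i => by
      rw [(hπ i).1, (hπ i).2, hB1, hB3, smul_mul_assoc, hprod]
    simp only [hpair]
    rw [← List.prod_ofFn, ← List.prod_map_smul_of_isIdempotentElem hidem
      (by simpa using hn.ne'), List.map_ofFn, Function.comp_def]
  · intro hno
    by_contra hne
    refine hno (exists_interleaves_of_forall fun i =>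
      exists_column_pair_of_mul_ne_zero hzero hB1 hB2 hB3 hB4 (i := i) fun h0 => hne ?_)
    exact List.prod_eq_zero (List.mem_ofFn.mpr ⟨i, h0⟩)
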